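/- arXiv:2504.14916 — 3 statements merged into one kernel-verified Lean document; each statement's English description precedes it below -/
import Mathlib

section
/- For every even integer n ≥ 4, the Sombor characteristic polynomial of the order super commuting graph Δ^o(D_{2n}) of the dihedral group D_{2n} equals (x + (2n−1)·√2)^{2n−1} · (x − (2n−1)²·√2); equivalently, the Sombor spectrum of Δ^o(D_{2n}) consists of −(2n−1)·√2 with multiplicity 2n−1 and (2n−1)²·√2 with multiplicity 1. -/
open Polynomial
open scoped Classical

/-- Degree of a vertex. -/
noncomputable def sdeg {V : Type*} (G : SimpleGraph V) (v : V) : ℕ := {u | G.Adj v u}.ncard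

/-- Sombor matrix of a graph. -/
noncomputable def somborMatrix {V : Type*} (G : SimpleGraph V) : Matrix V V ℝ :=
  Matrix.of fun u v =>
    if G.Adj u v then Real.sqrt ((sdeg G u : ℝ) ^ 2 + (sdeg G v : ℝ) ^ 2) else 0

/-- Sombor characteristic polynomial det(x·I − S(Γ)). -/
noncomputable def somborCharpoly {V : Type*} [Fintype V] [DecidableEq V] (G : SimpleGraph V) :
    Polynomial ℝ :=
  (somborMatrix G).charpoly

noncomputable def rt2 : ℝ := Real.sqrt 2

/-- The `R`-super `Γ` graph. -/
def superGraph {V : Type*} (A : SimpleGraph V) (r : V → V → Prop) (hr : Equivalence r) :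
    SimpleGraph V where
  Adj x y := x ≠ y ∧ (r x y ∨ ∃ x' y', r x x' ∧ r y y' ∧ A.Adj x' y')
  symm := by
    refine ⟨?_⟩
    rintro x y ⟨hxy, h | ⟨x', y', hx, hy, hadj⟩⟩
    · exact ⟨hxy.symm, Or.inl (hr.symm h)⟩
    · exact ⟨hxy.symm, Or.inr ⟨y', x', hy, hx, hadj.symm⟩⟩
  loopless := by refine ⟨?_⟩; rintro x ⟨h, -⟩; exact h rfl

/-- Same-order relation. -/
def orderRel (G : Type*) [Monoid G] : G → G → Prop := fun x y => orderOf x = orderOf y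

theorem orderRel_equivalence (G : Type*) [Monoid G] : Equivalence (orderRel G) :=
  ⟨fun _ => rfl, fun h => h.symm, fun h1 h2 => h1.trans h2⟩

/-- Conjugacy relation. -/
def conjRel (G : Type*) [Group G] : G → G → Prop := fun x y => ∃ a : G, x = a * y * a⁻¹

theorem conjRel_equivalence (G : Type*) [Group G] : Equivalence (conjRel G) := by
  constructor
  · intro x; exact ⟨1, by simp⟩
  · rintro x y ⟨a, rfl⟩; exact ⟨a⁻¹, by group⟩
  · rintro x y z ⟨a, rfl⟩ ⟨b, rfl⟩; exact ⟨a * b, by group⟩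

/-- Commuting graph. -/
def commutingGraph (G : Type*) [Group G] : SimpleGraph G where
  Adj x y := x ≠ y ∧ x * y = y * x
  symm := by refine ⟨?_⟩; rintro x y ⟨h, c⟩; exact ⟨h.symm, c.symm⟩
  loopless := by refine ⟨?_⟩; rintro x ⟨h, -⟩; exact h rfl

/-- Power graph. -/
def powerGraph (G : Type*) [Group G] : SimpleGraph G where
  Adj x y := x ≠ y ∧ (x ∈ Subgroup.zpowers y ∨ y ∈ Subgroup.zpowers x)
  symm := by refine ⟨?_⟩; rintro x y ⟨h, c⟩; exact ⟨h.symm, c.symm⟩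
  loopless := by refine ⟨?_⟩; rintro x ⟨h, -⟩; exact h rfl

/-- Enhanced power graph. -/
def enhancedPowerGraph (G : Type*) [Group G] : SimpleGraph G where
  Adj x y := x ≠ y ∧ ∃ z : G, x ∈ Subgroup.zpowers z ∧ y ∈ Subgroup.zpowers z
  symm := by refine ⟨?_⟩; rintro x y ⟨h, z, hx, hy⟩; exact ⟨h.symm, z, hy, hx⟩
  loopless := by refine ⟨?_⟩; rintro x ⟨h, -⟩; exact h rfl

/-! For even `n` the rotation `r (n / 2)` is a central involution of `D_{2n}`. Rotations commute
with each other, and a reflection `s` has the same order as `r (n / 2)`, which commutes with every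
rotation; so any two distinct elements of `D_{2n}` are adjacent in `Δ^o(D_{2n})`, which is therefore
the complete graph on `2n` vertices. A complete graph on `N` vertices is `(N - 1)`-regular, so its
Sombor matrix is `(N - 1)√2 (J - I)`, a rank-one matrix shifted by a scalar, whose characteristic
polynomial is `(x + (N - 1)√2)^(N - 1) (x - (N - 1)²√2)`. -/

section Sombor

variable {V : Type*}

theorem Matrix.charpoly_smul_adjMatrix_top {R : Type*} [CommRing R] [Fintype V] [DecidableEq V]
    [Nonempty V] (c : R) :
    (c • (⊤ : SimpleGraph V).adjMatrix R).charpoly =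
      (X + C c) ^ (Fintype.card V - 1) * (X - C (((Fintype.card V : R) - 1) * c)) := by
  have hrank_one : c • (⊤ : SimpleGraph V).adjMatrix R =
      Matrix.vecMulVec (fun _ => c) (fun _ => 1) - Matrix.scalar V c := by
    ext i j
    by_cases h : i = j <;> simp [h, Matrix.vecMulVec_apply]
  have hdot : (fun _ : V => c) ⬝ᵥ (fun _ => 1) = Fintype.card V * c := by
    simp [dotProduct]
  obtain ⟨k, hk⟩ : ∃ k, Fintype.card V = k + 1 := Nat.exists_eq_add_one.mpr Fintype.card_pos
  rw [hrank_one, Matrix.charpoly_sub_scalar, Matrix.charpoly_vecMulVec, hdot, hk,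
    add_tsub_cancel_right, smul_eq_C_mul, sub_comp, mul_comp, pow_comp, pow_comp, X_comp, C_comp,
    Nat.cast_succ, add_sub_cancel_right, map_mul, map_mul, map_add, map_one]
  ring

theorem sdeg_top [Fintype V] (v : V) : sdeg (⊤ : SimpleGraph V) v = Fintype.card V - 1 := by
  have h : {u | (⊤ : SimpleGraph V).Adj v u} = ({v}ᶜ : Set V) := by
    ext u; simp [eq_comm]
  rw [sdeg, h, Set.ncard_compl, Set.ncard_singleton, Nat.card_eq_fintype_card]

theorem somborMatrix_eq_smul_adjMatrix {G : SimpleGraph V} [DecidableRel G.Adj] {k : ℕ}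
    (hG : ∀ v, sdeg G v = k) :
    somborMatrix G = ((k : ℝ) * rt2) • G.adjMatrix ℝ := by
  ext u v
  by_cases h : G.Adj u v
  · simp [somborMatrix, h, hG, rt2, ← two_mul, mul_comm]
  · simp [somborMatrix, h]

theorem somborCharpoly_top [Fintype V] [DecidableEq V] [Nonempty V] :
    somborCharpoly (⊤ : SimpleGraph V) =
      (X + C (((Fintype.card V : ℝ) - 1) * rt2)) ^ (Fintype.card V - 1) *
        (X - C (((Fintype.card V : ℝ) - 1) ^ 2 * rt2)) := by
  rw [somborCharpoly, somborMatrix_eq_smul_adjMatrix sdeg_top,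
    Matrix.charpoly_smul_adjMatrix_top, Nat.cast_pred Fintype.card_pos, ← mul_assoc, ← sq]

end Sombor

abbrev orderSuperCommutingGraph (G : Type*) [Group G] : SimpleGraph G :=
  superGraph (commutingGraph G) (orderRel G) (orderRel_equivalence G)

section OrderSuperCommuting

variable {G : Type*} [Group G]

theorem orderSuperCommutingGraph_adj_of_commute {x y : G} (hxy : x ≠ y) (h : Commute x y) :
    (orderSuperCommutingGraph G).Adj x y :=
  ⟨hxy, Or.inr ⟨x, y, rfl, rfl, hxy, h⟩⟩

theorem orderSuperCommutingGraph_adj_of_orderOf_eq_two {z x y : G} (hz : ∀ g, Commute z g)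
    (hz2 : orderOf z = 2) (hx : orderOf x = 2) (hxy : x ≠ y) :
    (orderSuperCommutingGraph G).Adj x y := by
  by_cases hy : orderOf y = 2
  · exact ⟨hxy, Or.inl (hx.trans hy.symm)⟩
  · have hzy : z ≠ y := fun h => hy (h ▸ hz2)
    exact ⟨hxy, Or.inr ⟨z, y, hx.trans hz2.symm, rfl, hzy, hz y⟩⟩

end OrderSuperCommuting

namespace DihedralGroup

variable {n m : ℕ}

theorem commute_r (i j : ZMod n) : Commute (r i) (r j) := by
  simp only [Commute, SemiconjBy, r_mul_r, add_comm]

theorem orderOf_r_of_eq_add_self [NeZero n] (h : n = m + m) : orderOf (r (m : ZMod n)) = 2 := by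
  apply orderOf_eq_prime
  · rw [sq, r_mul_r, ← Nat.cast_add, ← h, ZMod.natCast_self, r_zero]
  · rw [one_def, Ne, r.injEq, ZMod.natCast_eq_zero_iff]
    have hn := NeZero.ne n
    exact fun hdvd => by have := Nat.le_of_dvd (by omega) hdvd; omega

theorem commute_r_of_eq_add_self (h : n = m + m) (g : DihedralGroup n) :
    Commute (r (m : ZMod n)) g := by
  have hneg : -(m : ZMod n) = m := by
    rw [neg_eq_iff_add_eq_zero, ← Nat.cast_add, ← h, ZMod.natCast_self]
  cases g with
  | r j => exact commute_r _ _
  | sr j => simp only [Commute, SemiconjBy, r_mul_sr, sr_mul_r, sub_eq_add_neg, hneg]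


theorem orderSuperCommutingGraph_eq_top [NeZero n] (hn : Even n) :
    orderSuperCommutingGraph (DihedralGroup n) = ⊤ := by
  obtain ⟨m, hm⟩ := hn
  have hz := commute_r_of_eq_add_self hm
  have hz2 := orderOf_r_of_eq_add_self hm
  ext x y
  refine ⟨fun h => h.ne, fun hxy => ?_⟩
  rcases x with i | i <;> rcases y with j | j
  · exact orderSuperCommutingGraph_adj_of_commute hxy (commute_r i j)
  · exact (orderSuperCommutingGraph_adj_of_orderOf_eq_two hz hz2 (orderOf_sr j) hxy.symm).symm
  all_goals exact orderSuperCommutingGraph_adj_of_orderOf_eq_two hz hz2 (orderOf_sr i) hxy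

end DihedralGroup

theorem stmt7_general (n : ℕ) [NeZero n] (heven : Even n) :
    somborCharpoly (superGraph (commutingGraph (DihedralGroup n))
        (orderRel (DihedralGroup n)) (orderRel_equivalence (DihedralGroup n))) =
      (X + C ((2 * (n : ℝ) - 1) * rt2)) ^ (2 * n - 1) *
        (X - C ((2 * (n : ℝ) - 1) ^ 2 * rt2)) := by
  rw [← orderSuperCommutingGraph, DihedralGroup.orderSuperCommutingGraph_eq_top heven,
    somborCharpoly_top, DihedralGroup.card, Nat.cast_mul, Nat.cast_ofNat]

theorem stmt7 (n : ℕ) [NeZero n] (hn : 4 ≤ n) (heven : Even n) :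
    somborCharpoly (superGraph (commutingGraph (DihedralGroup n))
        (orderRel (DihedralGroup n)) (orderRel_equivalence (DihedralGroup n))) =
      (X + C ((2 * (n : ℝ) - 1) * rt2)) ^ (2 * n - 1) *
        (X - C ((2 * (n : ℝ) - 1) ^ 2 * rt2)) :=
  stmt7_general n heven
end

section
/- For every odd integer n ≥ 3, the Sombor characteristic polynomial of the conjugacy super commuting graph Δ^c(Q_{4n}) of the generalized quaternion group Q_{4n} equals (x + (4n−1)·√2) · (x + (2n−1)·√2)^{2n−3} · (x + (2n+1)·√2)^{2n−1} · [ (x − (4n−1)·√2)·(x − (2n−1)(2n−3)·√2)·(x − (2n−1)(2n+1)·√2) − 8(n−1)(10n² − 6n + 1)·(x − (2n−1)(2n+1)·√2) − 8n(10n² − 2n + 1)·(x − (2n−1)(2n−3)·√2) ]. -/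
open Polynomial
open scoped Classical

/-!
For odd `n`, `Δ^c(Q_{4n})` is the join of `K₂` (the centre `{1, a n}`) with the disjoint union of
`K_{2n-2}` (the non-central rotations) and `K_{2n}` (the reflections `xa i`). Rotations commute
with each other, a non-central rotation commutes with no reflection, and conjugacy preserves the
three kinds; conversely, as `n` is odd, every reflection is conjugate to a given reflection
`y = xa i` or to `y⁻¹ = xa (n + i)`, which commutes with `y`.

So the Sombor matrix is a blow-up `S u v = B (k u) (k v)` (zero diagonal) of a `3 × 3` matrix `B`
built from the degrees `4n - 1`, `2n - 1`, `2n + 1`. Writing `Δ = diag (X + B (k u) (k u))` and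
`P` for the indicator matrix of the partition, `X - S = Δ - P B Pᵀ`, and the Weinstein–Aronszajn
identity `det (1 - U V) = det (1 - V U)` gives
`charpoly S = ∏ i, (X + B i i) ^ (m i - 1) * charpoly (B · diag (m) - diag (B i i))`,
`m i` being the sizes of the parts.
-/

open Finset Matrix

section Blowup

variable {V ι : Type*}

def Matrix.blowup {R : Type*} [Zero R] [DecidableEq V] (k : V → ι) (B : Matrix ι ι R) :
    Matrix V V R :=
  of fun u v => if u = v then 0 else B (k u) (k v)

def Matrix.blowupQuotient {R : Type*} [CommRing R] [Fintype V] [Fintype ι] [DecidableEq ι]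
    (k : V → ι) (B : Matrix ι ι R) : Matrix ι ι R :=
  B * diagonal (fun j => (#{u | k u = j} : R)) - diagonal (fun i => B i i)

lemma Matrix.blowupQuotient_apply {R : Type*} [CommRing R] [Fintype V] [Fintype ι] [DecidableEq ι]
    (k : V → ι) (B : Matrix ι ι R) (i j : ι) :
    B.blowupQuotient k i j = B i j * #{u | k u = j} - if i = j then B i i else 0 := by
  simp [blowupQuotient, diagonal_apply]

lemma Matrix.blowup_eq_submatrix_sub_diagonal {R : Type*} [AddGroup R] [DecidableEq V]
    (k : V → ι) (B : Matrix ι ι R) :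
    B.blowup k = B.submatrix k k - diagonal (fun u => B (k u) (k u)) := by
  ext u v
  by_cases h : u = v
  · subst h; simp [blowup]
  · simp [blowup, h]

lemma Finset.prod_comp_eq_prod_pow_card_fiber {M : Type*} [CommMonoid M] [Fintype V] [Fintype ι]
    [DecidableEq ι] (k : V → ι) (c : ι → M) :
    ∏ u, c (k u) = ∏ i, c i ^ #{u | k u = i} := by
  rw [← prod_fiberwise univ k (fun u => c (k u))]
  refine prod_congr rfl fun i _ => ?_
  rw [prod_congr rfl fun u hu => by rw [(mem_filter.1 hu).2], prod_const]

lemma Matrix.one_submatrix_mul_mul_transpose {R : Type*} [CommRing R] [Fintype ι] [DecidableEq ι]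
    (k : V → ι) (B : Matrix ι ι R) :
    (1 : Matrix ι ι R).submatrix k id * B * ((1 : Matrix ι ι R).submatrix k id)ᵀ =
      B.submatrix k k := by
  ext u v
  simp [mul_apply, one_apply]

lemma Matrix.transpose_one_submatrix_mul_diagonal_mul {R : Type*} [CommRing R] [Fintype V]
    [DecidableEq V] [DecidableEq ι] (k : V → ι) (c : ι → R) :
    ((1 : Matrix ι ι R).submatrix k id)ᵀ * diagonal (fun u => c (k u)) *
        (1 : Matrix ι ι R).submatrix k id =
      diagonal (fun i => (#{u | k u = i} : R) * c i) := by
  ext i j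
  simp only [transpose_submatrix, transpose_one, mul_apply, submatrix_apply, one_apply, id_eq,
    diagonal_apply, mul_ite, ite_mul, one_mul, zero_mul, mul_zero, sum_ite_eq', mem_univ,
    if_true, mul_one]
  split_ifs with h
  · subst h
    rw [← sum_filter, sum_congr rfl fun u hu => ?_, sum_const, nsmul_eq_mul]
    obtain rfl := (mem_filter.1 hu).2
    rw [if_pos rfl]
  · refine sum_eq_zero fun u _ => ?_
    split_ifs with h₁ h₂ <;> first | rfl | exact absurd (h₂.trans h₁) h

theorem Matrix.det_diagonal_sub_submatrix_mul {F : Type*} [Field F] [Fintype V] [DecidableEq V]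
    [Fintype ι] [DecidableEq ι] (k : V → ι) (B : Matrix ι ι F) (c : ι → F) (hc : ∀ i, c i ≠ 0) :
    det (diagonal (fun u => c (k u)) - B.submatrix k k) * ∏ i, c i =
      (∏ i, c i ^ #{u | k u = i}) *
        det (diagonal c - B * diagonal (fun j => (#{u | k u = j} : F))) := by
  have hD := transpose_one_submatrix_mul_diagonal_mul (R := F) k (fun i => (c i)⁻¹)
  set P : Matrix V ι F := (1 : Matrix ι ι F).submatrix k id
  have hfactor : diagonal (fun u => c (k u)) - B.submatrix k k =
      diagonal (fun u => c (k u)) * (1 - (diagonal (fun u => (c (k u))⁻¹) * P) * (B * Pᵀ)) := by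
    rw [Matrix.mul_sub, Matrix.mul_one, ← Matrix.mul_assoc, ← Matrix.mul_assoc (diagonal _),
      diagonal_mul_diagonal]
    simp only [mul_inv_cancel₀ (hc _), diagonal_one, Matrix.one_mul, ← Matrix.mul_assoc,
      one_submatrix_mul_mul_transpose, P]
  have hquot : (1 - B * diagonal (fun i => #{u | k u = i} * (c i)⁻¹)) * diagonal c =
      diagonal c - B * diagonal (fun j => (#{u | k u = j} : F)) := by
    rw [Matrix.sub_mul, Matrix.one_mul, Matrix.mul_assoc, diagonal_mul_diagonal]
    congr 3
    funext i
    field_simp [hc i]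
  rw [hfactor, det_mul, det_one_sub_mul_comm, det_diagonal, prod_comp_eq_prod_pow_card_fiber,
    mul_assoc, Matrix.mul_assoc B, ← Matrix.mul_assoc Pᵀ, hD, ← hquot, det_mul, det_diagonal]

lemma Matrix.map_charpoly_eq_det {n R S : Type*} [Fintype n] [DecidableEq n] [CommRing R]
    [CommRing S] (f : R[X] →+* S) (M : Matrix n n R) :
    f M.charpoly = det (scalar n (f X) - M.map (f.comp C)) := by
  rw [charpoly, RingHom.map_det, RingHom.mapMatrix_apply]
  congr
  ext i j
  obtain rfl | hij := eq_or_ne i j <;> simp [*]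

theorem Matrix.charpoly_blowup_mul {K : Type*} [Field K] [Fintype V] [DecidableEq V] [Fintype ι]
    [DecidableEq ι] (k : V → ι) (B : Matrix ι ι K) :
    (∏ i, (X + C (B i i))) * (B.blowup k).charpoly =
      (∏ i, (X + C (B i i)) ^ #{u | k u = i}) * (B.blowupQuotient k).charpoly := by
  -- Compare both sides in the fraction field, where every `X + C (B i i)` is invertible.
  set φ := algebraMap K[X] (FractionRing K[X])
  have hφ : Function.Injective φ := IsFractionRing.injective K[X] (FractionRing K[X])
  have hc : ∀ i, φ (X + C (B i i)) ≠ 0 := fun i => (map_ne_zero_iff φ hφ).2 (X_add_C_ne_zero _)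
  have hblowup : scalar V (φ X) - (B.blowup k).map (φ.comp C) =
      diagonal (fun u => φ (X + C (B (k u) (k u)))) - (B.map (φ.comp C)).submatrix k k := by
    rw [blowup_eq_submatrix_sub_diagonal]
    ext u v
    by_cases h : u = v
    · subst h; simp
    · simp [h]
  have hquot : scalar ι (φ X) - (B.blowupQuotient k).map (φ.comp C) =
      diagonal (fun i => φ (X + C (B i i))) -
        B.map (φ.comp C) * diagonal (fun j => (#{u | k u = j} : FractionRing K[X])) := by
    ext i j
    by_cases h : i = j
    · subst h
      simp only [scalar_apply, blowupQuotient, RingHom.coe_comp, sub_apply, diagonal_apply_eq,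
        map_apply, mul_diagonal, Function.comp_apply, map_sub, map_mul, map_natCast, map_add]
      ring
    · simp [blowupQuotient, h]
  apply hφ
  simp only [map_mul, map_prod, map_pow, map_charpoly_eq_det, hblowup, hquot]
  rw [mul_comm]
  exact det_diagonal_sub_submatrix_mul k (B.map (φ.comp C)) _ hc

theorem Matrix.charpoly_blowup {K : Type*} [Field K] [Fintype V] [DecidableEq V] [Fintype ι]
    [DecidableEq ι] (k : V → ι) (B : Matrix ι ι K) (hk : Function.Surjective k) :
    (B.blowup k).charpoly =
      (∏ i, (X + C (B i i)) ^ (#{u | k u = i} - 1)) * (B.blowupQuotient k).charpoly := by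
  have hpos : ∀ i, 0 < #{u | k u = i} := fun i =>
    card_pos.2 (let ⟨u, hu⟩ := hk i; ⟨u, by simpa using hu⟩)
  refine mul_left_cancel₀ (prod_ne_zero_iff.2 fun i (_ : i ∈ univ) => X_add_C_ne_zero (B i i)) ?_
  rw [charpoly_blowup_mul, ← mul_assoc, ← prod_mul_distrib]
  congr 1
  refine prod_congr rfl fun i _ => ?_
  rw [← pow_succ', Nat.sub_add_cancel (hpos i)]

end Blowup

lemma Matrix.charpoly_fin_three_of_eq_zero {R : Type*} [CommRing R] (M : Matrix (Fin 3) (Fin 3) R)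
    (h₁₂ : M 1 2 = 0) (h₂₁ : M 2 1 = 0) :
    M.charpoly = (X - C (M 0 0)) * (X - C (M 1 1)) * (X - C (M 2 2)) -
      C (M 0 1 * M 1 0) * (X - C (M 2 2)) - C (M 0 2 * M 2 0) * (X - C (M 1 1)) := by
  rw [charpoly, det_fin_three]
  simp only [charmatrix_apply_eq, charmatrix_apply_ne, ne_eq, Fin.reduceEq, not_false_eq_true, h₁₂,
    h₂₁, map_zero, neg_zero, map_mul]
  ring

section Sombor

variable {V ι : Type*} {G : SimpleGraph V} {k : V → ι} {A : ι → ι → Prop} [DecidableRel A]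

lemma sdeg_eq_card_sub_one [Fintype V] [DecidableEq V]
    (hG : ∀ u v, G.Adj u v ↔ u ≠ v ∧ A (k u) (k v)) {u : V} (hu : A (k u) (k u)) :
    sdeg G u = #{v | A (k u) (k v)} - 1 := by
  have : {v | G.Adj u v}.toFinset = ({v | A (k u) (k v)} : Finset V).erase u := by
    ext v
    simp [hG, and_comm, eq_comm]
  rw [sdeg, Set.ncard_eq_toFinset_card', this, card_erase_of_mem (by simpa using hu)]

lemma Finset.card_filter_comp_eq_sum [Fintype V] [Fintype ι] [DecidableEq ι] (i : ι) :
    #{v | A i (k v)} = ∑ j, if A i j then #{v | k v = j} else 0 := by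
  rw [card_eq_sum_card_fiberwise (f := k) (t := univ) fun _ _ => mem_coe.2 (mem_univ _)]
  refine sum_congr rfl fun j _ => ?_
  split_ifs with h
  · congr 1
    ext v
    simp only [mem_filter, mem_univ, true_and]
    exact ⟨fun h => h.2, fun hv => ⟨hv ▸ h, hv⟩⟩
  · exact card_eq_zero.2 (filter_eq_empty_iff.2 fun v hv hkv => h (by simpa [hkv.symm] using hv))

lemma somborMatrix_eq_blowup [DecidableEq V] (hG : ∀ u v, G.Adj u v ↔ u ≠ v ∧ A (k u) (k v))
    (d : ι → ℕ) (hd : ∀ u, sdeg G u = d (k u)) :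
    somborMatrix G =
      (of fun i j => if A i j then √((d i : ℝ) ^ 2 + (d j : ℝ) ^ 2) else 0).blowup k := by
  ext u v
  by_cases h : u = v
  · simp [somborMatrix, blowup, h]
  · simp [somborMatrix, blowup, h, hG, hd]

end Sombor

lemma Real.sqrt_sq_add_sq_self {x : ℝ} (hx : 0 ≤ x) : √(x ^ 2 + x ^ 2) = x * √2 := by
  rw [← two_mul, Real.sqrt_mul zero_le_two, Real.sqrt_sq hx, mul_comm]

namespace ZMod

lemma exists_eq_two_mul_or_eq_two_mul_add_one {N : ℕ} [NeZero N] (c : ZMod N) :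
    ∃ m, c = 2 * m ∨ c = 2 * m + 1 := by
  obtain ⟨m, hm | hm⟩ := Nat.even_or_odd' c.val
  · exact ⟨m, Or.inl (by rw [← natCast_zmod_val c, hm]; push_cast; ring)⟩
  · exact ⟨m, Or.inr (by rw [← natCast_zmod_val c, hm]; push_cast; ring)⟩

variable {n : ℕ}

lemma natCast_half_ne_zero [NeZero n] : (n : ZMod (2 * n)) ≠ 0 := by
  rw [Ne, ZMod.natCast_eq_zero_iff]
  exact fun h => NeZero.ne n (Nat.eq_zero_of_dvd_of_lt h (by have := NeZero.pos n; omega))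

lemma two_mul_natCast_half : 2 * (n : ZMod (2 * n)) = 0 := by
  exact_mod_cast ZMod.natCast_self (2 * n)

lemma two_mul_eq_zero_iff_eq_zero_or_eq_half [NeZero n] {i : ZMod (2 * n)} :
    2 * i = 0 ↔ i = 0 ∨ i = n := by
  refine ⟨fun h => ?_, ?_⟩
  · have hdvd : 2 * n ∣ 2 * i.val := by
      rw [← ZMod.natCast_eq_zero_iff]; push_cast; rwa [ZMod.natCast_zmod_val]
    obtain ⟨k, hk⟩ := Nat.dvd_of_mul_dvd_mul_left two_pos hdvd
    have hk2 : k < 2 := by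
      by_contra hk2
      have := ZMod.val_lt i
      nlinarith
    interval_cases k
    · left; rw [← ZMod.natCast_zmod_val i, hk]; simp
    · right; rw [← ZMod.natCast_zmod_val i, hk, mul_one]
  · rintro (rfl | rfl)
    · exact mul_zero 2
    · exact two_mul_natCast_half

end ZMod

abbrev conjSuperCommutingGraph (G : Type*) [Group G] : SimpleGraph G :=
  superGraph (commutingGraph G) (conjRel G) (conjRel_equivalence G)

lemma conjSuperCommutingGraph_adj_of_commute {G : Type*} [Group G] {x y : G} (hne : x ≠ y)
    (h : x * y = y * x) : (conjSuperCommutingGraph G).Adj x y :=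
  ⟨hne, Or.inr ⟨x, y, (conjRel_equivalence G).refl x, (conjRel_equivalence G).refl y, hne, h⟩⟩

namespace QuaternionGroup

variable {n : ℕ}

@[simp] lemma inv_a (i : ZMod (2 * n)) : (a i)⁻¹ = a (-i) := rfl

@[simp] lemma inv_xa (i : ZMod (2 * n)) : (xa i)⁻¹ = xa ((n : ZMod (2 * n)) + i) := rfl

lemma a_mul_xa_eq_xa_mul_a_iff (i j : ZMod (2 * n)) : a i * xa j = xa j * a i ↔ 2 * i = 0 := by
  rw [a_mul_xa, xa_mul_a, xa.injEq]
  constructor <;> intro h <;> linear_combination -h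

lemma a_mul_xa_mul_inv (m j : ZMod (2 * n)) : a m * xa j * (a m)⁻¹ = xa (j - 2 * m) := by
  simp only [a_mul_xa, inv_a, xa_mul_a, xa.injEq]; ring

lemma xa_ne_inv [NeZero n] (i : ZMod (2 * n)) : xa i ≠ (xa i)⁻¹ := by
  rw [inv_xa, Ne, xa.injEq]
  intro h
  exact ZMod.natCast_half_ne_zero (by linear_combination -h)

lemma conjRel_xa_or_conjRel_xa_inv (hodd : Odd n) (i j : ZMod (2 * n)) :
    conjRel (QuaternionGroup n) (xa j) (xa i) ∨ conjRel (QuaternionGroup n) (xa j) (xa i)⁻¹ := by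
  have : NeZero n := ⟨hodd.pos.ne'⟩
  obtain ⟨t, ht⟩ := hodd
  obtain ⟨m, hm | hm⟩ := ZMod.exists_eq_two_mul_or_eq_two_mul_add_one (i - j)
  · exact Or.inl ⟨a m, by rw [a_mul_xa_mul_inv, xa.injEq]; linear_combination -hm⟩
  · refine Or.inr ⟨a (m + t + 1), ?_⟩
    rw [inv_xa, a_mul_xa_mul_inv, xa.injEq]
    have hn : ((n : ℕ) : ZMod (2 * n)) = 2 * t + 1 := by rw [ht]; push_cast; ring
    linear_combination -hm - hn

/-- `0` on the centre `{a 0, a n}`, `1` on the other rotations, `2` on the reflections. -/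
def kind : QuaternionGroup n → Fin 3
  | a i => if 2 * i = 0 then 0 else 1
  | xa _ => 2

@[simp] lemma kind_a (i : ZMod (2 * n)) : kind (a i) = if 2 * i = 0 then 0 else 1 := rfl

@[simp] lemma kind_xa (i : ZMod (2 * n)) : kind (xa i) = 2 := rfl

abbrev KindAdj (i j : Fin 3) : Prop := i = j ∨ i = 0 ∨ j = 0

lemma kind_conj (g x : QuaternionGroup n) : kind (g * x * g⁻¹) = kind x := by
  rcases g with i | i <;> rcases x with j | j
  · simp [kind]
  · rfl
  · have h : 2 * ((n : ZMod (2 * n)) + (n + i) - (i + j)) = -(2 * j) := by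
      linear_combination 2 * ZMod.two_mul_natCast_half (n := n)
    simp [kind, h]
  · rfl

lemma kind_eq_of_conjRel {x y : QuaternionGroup n} (h : conjRel (QuaternionGroup n) x y) :
    kind x = kind y := by
  obtain ⟨g, rfl⟩ := h
  exact kind_conj g y

lemma kindAdj_of_commute {x y : QuaternionGroup n} (h : x * y = y * x) :
    KindAdj (kind x) (kind y) := by
  rcases x with i | i <;> rcases y with j | j
  · simp only [kind]; split_ifs <;> decide
  · exact Or.inr (Or.inl (by simp [(a_mul_xa_eq_xa_mul_a_iff i j).1 h]))
  · exact Or.inr (Or.inr (by simp [(a_mul_xa_eq_xa_mul_a_iff j i).1 h.symm]))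
  · exact Or.inl rfl

lemma commute_of_kind_eq_zero {x : QuaternionGroup n} (hx : kind x = 0) (y : QuaternionGroup n) :
    x * y = y * x := by
  rcases x with i | i
  · have hi : 2 * i = 0 := by by_contra h; simp [h] at hx
    rcases y with j | j
    · simp [add_comm]
    · exact (a_mul_xa_eq_xa_mul_a_iff i j).2 hi
  · simp at hx

theorem conjSuperCommutingGraph_adj_iff [NeZero n] (hodd : Odd n) {x y : QuaternionGroup n} :
    (conjSuperCommutingGraph (QuaternionGroup n)).Adj x y ↔
      x ≠ y ∧ KindAdj (kind x) (kind y) := by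
  refine ⟨fun ⟨hne, h⟩ => ⟨hne, ?_⟩, fun ⟨hne, h⟩ => ?_⟩
  · rcases h with h | ⟨x', y', hx, hy, -, hcomm⟩
    · exact Or.inl (kind_eq_of_conjRel h)
    · rw [kind_eq_of_conjRel hx, kind_eq_of_conjRel hy]
      exact kindAdj_of_commute hcomm
  · rcases h with h | h | h
    · rcases x with i | i <;> rcases y with j | j
      · exact conjSuperCommutingGraph_adj_of_commute hne (by simp [add_comm])
      · simp only [kind] at h; split_ifs at h <;> exact absurd h (by decide)
      · simp only [kind] at h; split_ifs at h <;> exact absurd h (by decide)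
      · rcases conjRel_xa_or_conjRel_xa_inv hodd j i with hc | hc
        · exact ⟨hne, Or.inl hc⟩
        · exact ⟨hne, Or.inr ⟨(xa j)⁻¹, xa j, hc, (conjRel_equivalence _).refl _,
            (xa_ne_inv j).symm, (inv_mul_cancel _).trans (mul_inv_cancel _).symm⟩⟩
    · exact conjSuperCommutingGraph_adj_of_commute hne (commute_of_kind_eq_zero h y)
    · exact conjSuperCommutingGraph_adj_of_commute hne (commute_of_kind_eq_zero h x).symm

variable [NeZero n]

lemma card_filter_kind (i : Fin 3) :
    #{x : QuaternionGroup n | kind x = i} = ![2, 2 * n - 2, 2 * n] i := by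
  have h₀ : #{x : QuaternionGroup n | kind x = 0} = 2 := by
    have : ({x | kind x = 0} : Finset (QuaternionGroup n)) = {a 0, a n} := by
      ext (i | i)
      · simp only [mem_filter, mem_univ, true_and, kind_a, mem_insert, mem_singleton, a.injEq,
          ← ZMod.two_mul_eq_zero_iff_eq_zero_or_eq_half]
        split_ifs <;> simp_all
      · simp [-a_zero]
    rw [this, card_pair fun h => ZMod.natCast_half_ne_zero (a.inj h).symm]
  have h₂ : #{x : QuaternionGroup n | kind x = 2} = 2 * n := by
    have : ({x | kind x = 2} : Finset (QuaternionGroup n)) = univ.map ⟨xa, fun _ _ => xa.inj⟩ := by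
      ext (i | i)
      · simp only [mem_filter, mem_univ, true_and, kind_a, mem_map]
        split_ifs <;> simp
      · simp only [mem_filter, mem_univ, true_and, kind_xa, mem_map]
        exact iff_of_true trivial ⟨i, rfl⟩
    rw [this, card_map, card_univ, ZMod.card]
  have hsum := card_eq_sum_card_fiberwise (f := kind) (s := (univ : Finset (QuaternionGroup n)))
    (t := univ) fun _ _ => mem_coe.2 (mem_univ _)
  rw [Fin.sum_univ_three, card_univ, QuaternionGroup.card, h₀, h₂] at hsum
  fin_cases i
  · exact h₀
  · simp only [Fin.mk_one, cons_val_one, cons_val_zero]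
    omega
  · exact h₂

lemma kind_surjective (hn : 2 ≤ n) : Function.Surjective (kind : QuaternionGroup n → Fin 3) := by
  intro i
  obtain ⟨x, hx⟩ := card_pos.1 (by rw [card_filter_kind]; fin_cases i <;> simp <;> omega :
    0 < #{x : QuaternionGroup n | kind x = i})
  exact ⟨x, (mem_filter.1 hx).2⟩

lemma sdeg_conjSuperCommutingGraph (hodd : Odd n) (x : QuaternionGroup n) :
    sdeg (conjSuperCommutingGraph (QuaternionGroup n)) x =
      ![4 * n - 1, 2 * n - 1, 2 * n + 1] (kind x) := by
  have := NeZero.pos n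
  rw [sdeg_eq_card_sub_one (fun _ _ => conjSuperCommutingGraph_adj_iff hodd) (Or.inl rfl),
    card_filter_comp_eq_sum (A := KindAdj), Fin.sum_univ_three, card_filter_kind,
    card_filter_kind, card_filter_kind]
  generalize kind x = i
  fin_cases i <;> simp [KindAdj] <;> omega

noncomputable def kindSomborWeights (n : ℕ) : Matrix (Fin 3) (Fin 3) ℝ :=
  !![(4 * n - 1) * rt2, √((4 * n - 1) ^ 2 + (2 * n - 1) ^ 2), √((4 * n - 1) ^ 2 + (2 * n + 1) ^ 2);
    √((4 * n - 1) ^ 2 + (2 * n - 1) ^ 2), (2 * n - 1) * rt2, 0;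
    √((4 * n - 1) ^ 2 + (2 * n + 1) ^ 2), 0, (2 * n + 1) * rt2]

theorem somborMatrix_conjSuperCommutingGraph (hodd : Odd n) :
    somborMatrix (conjSuperCommutingGraph (QuaternionGroup n)) =
      (kindSomborWeights n).blowup kind := by
  have hn : (1 : ℝ) ≤ n := by exact_mod_cast NeZero.one_le
  have h₄ : ((4 * n - 1 : ℕ) : ℝ) = 4 * n - 1 := by
    rw [Nat.cast_sub (by have := NeZero.pos n; omega)]; push_cast; ring
  have h₂ : ((2 * n - 1 : ℕ) : ℝ) = 2 * n - 1 := by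
    rw [Nat.cast_sub (by have := NeZero.pos n; omega)]; push_cast; ring
  rw [somborMatrix_eq_blowup (fun _ _ => conjSuperCommutingGraph_adj_iff hodd) _
    (sdeg_conjSuperCommutingGraph hodd)]
  congr 1
  ext i j
  fin_cases i <;> fin_cases j <;>
    simp [kindSomborWeights, KindAdj, h₄, h₂, rt2, add_comm] <;>
    rw [Real.sqrt_sq_add_sq_self] <;> linarith

theorem charpoly_blowupQuotient_kindSomborWeights :
    ((kindSomborWeights n).blowupQuotient (kind : QuaternionGroup n → Fin 3)).charpoly =
      (X - C ((4 * (n : ℝ) - 1) * rt2)) *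
            (X - C ((2 * (n : ℝ) - 1) * (2 * (n : ℝ) - 3) * rt2)) *
            (X - C ((2 * (n : ℝ) - 1) * (2 * (n : ℝ) + 1) * rt2)) -
          C (8 * ((n : ℝ) - 1) * (10 * (n : ℝ) ^ 2 - 6 * (n : ℝ) + 1)) *
            (X - C ((2 * (n : ℝ) - 1) * (2 * (n : ℝ) + 1) * rt2)) -
          C (8 * (n : ℝ) * (10 * (n : ℝ) ^ 2 - 2 * (n : ℝ) + 1)) *
            (X - C ((2 * (n : ℝ) - 1) * (2 * (n : ℝ) - 3) * rt2)) := by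
  have hn : 1 ≤ n := NeZero.one_le
  have hcard : ∀ i, (#{x : QuaternionGroup n | kind x = i} : ℝ) =
      ![2, 2 * (n : ℝ) - 2, 2 * n] i := by
    intro i
    fin_cases i <;> simp [card_filter_kind, Nat.cast_sub (show 2 ≤ 2 * n by omega)]
  set Q := (kindSomborWeights n).blowupQuotient (kind : QuaternionGroup n → Fin 3)
  have hQ : ∀ i j, Q i j = kindSomborWeights n i j * ![2, 2 * (n : ℝ) - 2, 2 * n] j -
      if i = j then kindSomborWeights n i i else 0 := fun i j => by
    rw [← hcard]; exact blowupQuotient_apply _ _ i j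
  have hs : ∀ x y : ℝ, √(x ^ 2 + y ^ 2) * √(x ^ 2 + y ^ 2) = x ^ 2 + y ^ 2 := fun x y =>
    Real.mul_self_sqrt (by positivity)
  obtain ⟨h₀₀, h₁₁, h₂₂, h₀₁, h₀₂, h₁₂, h₂₁⟩ :
      Q 0 0 = (4 * n - 1) * rt2 ∧ Q 1 1 = (2 * n - 1) * (2 * n - 3) * rt2 ∧
      Q 2 2 = (2 * n - 1) * (2 * n + 1) * rt2 ∧
      Q 0 1 * Q 1 0 = 8 * (n - 1) * (10 * n ^ 2 - 6 * n + 1) ∧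
      Q 0 2 * Q 2 0 = 8 * n * (10 * n ^ 2 - 2 * n + 1) ∧ Q 1 2 = 0 ∧ Q 2 1 = 0 := by
    simp only [hQ, kindSomborWeights, of_apply, cons_val', cons_val_zero, cons_val_one,
      Matrix.cons_val, cons_val_fin_one, Fin.reduceEq, ↓reduceIte, sub_zero]
    refine ⟨by ring, by ring, by ring, ?_, ?_, by ring, by ring⟩
    · linear_combination (4 * (n : ℝ) - 4) * hs (4 * n - 1) (2 * n - 1)
    · linear_combination (4 * (n : ℝ)) * hs (4 * n - 1) (2 * n + 1)
  rw [charpoly_fin_three_of_eq_zero _ h₁₂ h₂₁, h₀₀, h₁₁, h₂₂, h₀₁, h₀₂]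

end QuaternionGroup

theorem stmt10 (n : ℕ) [NeZero n] (hn : 3 ≤ n) (hodd : Odd n) :
    somborCharpoly (superGraph (commutingGraph (QuaternionGroup n))
        (conjRel (QuaternionGroup n)) (conjRel_equivalence (QuaternionGroup n))) =
      (X + C ((4 * (n : ℝ) - 1) * rt2)) * (X + C ((2 * (n : ℝ) - 1) * rt2)) ^ (2 * n - 3) *
        (X + C ((2 * (n : ℝ) + 1) * rt2)) ^ (2 * n - 1) *
        ((X - C ((4 * (n : ℝ) - 1) * rt2)) *
            (X - C ((2 * (n : ℝ) - 1) * (2 * (n : ℝ) - 3) * rt2)) *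
            (X - C ((2 * (n : ℝ) - 1) * (2 * (n : ℝ) + 1) * rt2)) -
          C (8 * ((n : ℝ) - 1) * (10 * (n : ℝ) ^ 2 - 6 * (n : ℝ) + 1)) *
            (X - C ((2 * (n : ℝ) - 1) * (2 * (n : ℝ) + 1) * rt2)) -
          C (8 * (n : ℝ) * (10 * (n : ℝ) ^ 2 - 2 * (n : ℝ) + 1)) *
            (X - C ((2 * (n : ℝ) - 1) * (2 * (n : ℝ) - 3) * rt2))) := by
  rw [somborCharpoly, QuaternionGroup.somborMatrix_conjSuperCommutingGraph hodd,
    charpoly_blowup _ _ (QuaternionGroup.kind_surjective (by omega)), Fin.prod_univ_three,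
    QuaternionGroup.charpoly_blowupQuotient_kindSomborWeights]
  simp [QuaternionGroup.card_filter_kind, QuaternionGroup.kindSomborWeights, Nat.sub_sub]
end

section
/- For every integer n ≥ 3, the Sombor characteristic polynomial of the enhanced power graph P_E(D_{2n}) of the dihedral group D_{2n} equals (x + (n−1)·√2)^{n−2} · x^{n−1} · [ x²·(x − (n−1)(n−2)·√2) − (n−1)(5n² − 6n + 2)·x − 2n(2n² − 2n + 1)·(x − (n−1)(n−2)·√2) ]. -/
open Polynomial
open scoped Classical

/-!
A reflection has order two, so the only cyclic subgroup containing `sr i` is `{1, sr i}`, while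
all rotations lie in `⟨r 1⟩`. Hence `P_E(D_{2n})` is the complete graph on the rotations with the
`n` reflections pendant at the identity, and its Sombor matrix is a `hubMatrix` with `p = n - 1`
clique and `q = n` pendant vertices (the hub has degree `2n - 1`, the clique vertices `n - 1`).

For a hub matrix `M`, `xI - M` maps vectors that are constant on the clique and on the pendant
vertices to vectors of the same kind, so one bordering (Schur complement) step gives
`det (xI - M) = (x + a)^(p-1) (x - (p-1)a) x^q (x - p b² / (x - (p-1)a) - q c² / x)`
away from three values of `x`, which determines the polynomial.
-/

namespace Matrix

theorem det_fromBlocks_replicateCol_of_mulVec_eq {R n : Type*} [CommRing R] [Fintype n]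
    [DecidableEq n] {D : Matrix n n R} {y w : n → R} (hy : D *ᵥ y = w) (d : R) (u : n → R) :
    (fromBlocks (of fun _ _ => d : Matrix Unit Unit R) (replicateRow Unit u)
      (replicateCol Unit w) D).det = (d - u ⬝ᵥ y) * D.det := by
  have hcol : D * replicateCol Unit y = replicateCol Unit w := by
    rw [← hy]; ext i j; simp [mulVec, dotProduct, mul_apply]
  have hreduce : fromBlocks (of fun _ _ => d : Matrix Unit Unit R) (replicateRow Unit u)
      (replicateCol Unit w) D * fromBlocks 1 0 (-replicateCol Unit y) 1 =
      fromBlocks (of fun _ _ => d - u ⬝ᵥ y) (replicateRow Unit u) 0 D := by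
    rw [fromBlocks_multiply]
    congr 1
    · ext i j; simp [replicateRow_mul_replicateCol_apply]; ring
    · simp
    · simp [Matrix.mul_neg, hcol]
    · simp
  have := congrArg det hreduce
  rwa [det_mul, det_fromBlocks_zero₁₂, det_one, det_one, mul_one, mul_one, det_fromBlocks_zero₂₁,
    det_unique (of _)] at this

theorem det_smul_one_add_of_const {K α : Type*} [Field K] [Fintype α] [DecidableEq α]
    [Nonempty α] {s : K} (hs : s ≠ 0) (t : K) :
    (s • (1 : Matrix α α K) + of fun _ _ => t).det =
      s ^ (Fintype.card α - 1) * (s + Fintype.card α * t) := by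
  have : s • (1 : Matrix α α K) + (of fun _ _ => t) =
      s • (1 + replicateCol Unit (fun _ : α => t / s) *
        replicateRow Unit (fun _ : α => (1 : K))) := by
    ext i j; simp [mul_add, mul_apply, mul_div_cancel₀ _ hs]
  rw [this, det_smul, det_one_add_replicateCol_mul_replicateRow]
  obtain ⟨p, hp⟩ := Nat.exists_eq_add_one.mpr (Fintype.card_pos (α := α))
  simp [dotProduct, hp, pow_succ]
  field_simp

end Matrix

open Matrix

/-- The weighted adjacency matrix of a hub joined with weight `b` to each vertex of a clique `α`
with edge weight `a`, and with weight `c` to each of the pendant vertices `β`. -/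
def hubMatrix {K : Type*} [Zero K] (α β : Type*) [DecidableEq α] (a b c : K) :
    Matrix (Unit ⊕ (α ⊕ β)) (Unit ⊕ (α ⊕ β)) K :=
  fromBlocks 0 (replicateRow Unit (Sum.elim (fun _ => b) fun _ => c))
    (replicateCol Unit (Sum.elim (fun _ => b) fun _ => c))
    (fromBlocks (of fun i j => if i = j then 0 else a) 0 0 0)

section HubMatrix

variable {K α β : Type*} [Field K] [Fintype α] [DecidableEq α] [Nonempty α] [Fintype β]
  [DecidableEq β] [Nonempty β]

theorem eval_charpoly_hubMatrix {a b c x : K} (hx : x ≠ 0) (hxa : x + a ≠ 0)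
    (hxp : x - (Fintype.card α - 1) * a ≠ 0) :
    (hubMatrix α β a b c).charpoly.eval x =
      (x + a) ^ (Fintype.card α - 1) * x ^ (Fintype.card β - 1) *
        (x ^ 2 * (x - (Fintype.card α - 1) * a) - Fintype.card α * b ^ 2 * x -
          Fintype.card β * c ^ 2 * (x - (Fintype.card α - 1) * a)) := by
  set w : α ⊕ β → K := Sum.elim (fun _ => b) fun _ => c
  set D : Matrix (α ⊕ β) (α ⊕ β) K := fromBlocks ((x + a) • 1 + of fun _ _ => -a) 0 0 (x • 1)
  have hsplit : scalar _ x - hubMatrix α β a b c =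
      fromBlocks (of fun _ _ => x) (replicateRow Unit (-w)) (replicateCol Unit (-w)) D := by
    ext (_ | _ | _) (_ | _ | _) <;> simp [hubMatrix, D, w, one_apply, diagonal_apply]
    split_ifs <;> ring
  have hy : D *ᵥ Sum.elim (fun _ => -b / (x - (Fintype.card α - 1) * a)) (fun _ => -c / x) =
      -w := by
    ext (i | j) <;> simp [D, w, mulVec, dotProduct, one_apply, ite_mul]
    · rw [← Finset.sum_mul, Finset.sum_add_distrib, Finset.sum_ite_eq, Finset.sum_const,
        Finset.card_univ, nsmul_eq_mul, if_pos (Finset.mem_univ _),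
        show x + a + Fintype.card α * -a = x - (Fintype.card α - 1) * a by ring]
      field_simp
    · field_simp
  have hD : D.det = (x + a) ^ (Fintype.card α - 1) * (x - (Fintype.card α - 1) * a) *
      (x * x ^ (Fintype.card β - 1)) := by
    rw [det_fromBlocks_zero₂₁, det_smul_one_add_of_const hxa, det_smul, det_one, ← pow_succ',
      Nat.sub_add_cancel Fintype.card_pos]
    ring
  rw [eval_charpoly, hsplit, det_fromBlocks_replicateCol_of_mulVec_eq hy, hD]
  simp [dotProduct, w]
  field_simp
  ring

theorem charpoly_hubMatrix [Infinite K] (a b c : K) :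
    (hubMatrix α β a b c).charpoly =
      (X + C a) ^ (Fintype.card α - 1) * X ^ (Fintype.card β - 1) *
        (X ^ 2 * (X - C ((Fintype.card α - 1) * a)) - C (Fintype.card α * b ^ 2) * X -
          C (Fintype.card β * c ^ 2) * (X - C ((Fintype.card α - 1) * a))) := by
  refine eq_of_infinite_eval_eq _ _ (Set.Infinite.mono ?_
    (Set.toFinite {0, -a, (Fintype.card α - 1) * a}).infinite_compl)
  intro x hx
  simp only [Set.mem_compl_iff, Set.mem_insert_iff, Set.mem_singleton_iff, not_or] at hx
  obtain ⟨hx, hxa, hxp⟩ := hx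
  rw [Set.mem_ofPred_eq, eval_charpoly_hubMatrix hx (by rwa [← sub_neg_eq_add, sub_ne_zero])
    (sub_ne_zero.mpr hxp)]
  simp

end HubMatrix

namespace DihedralGroup

variable {n : ℕ}

theorem exists_eq_r_of_mem_zpowers_r {i : ZMod n} {x : DihedralGroup n}
    (hx : x ∈ Subgroup.zpowers (r i)) : ∃ j, x = r j := by
  obtain ⟨m, rfl⟩ := Subgroup.mem_zpowers_iff.mp hx
  exact ⟨_, r_zpow i m⟩

theorem eq_one_or_eq_of_mem_zpowers_sr {i : ZMod n} {x : DihedralGroup n}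
    (hx : x ∈ Subgroup.zpowers (sr i)) : x = 1 ∨ x = sr i := by
  obtain ⟨m, rfl⟩ := Subgroup.mem_zpowers_iff.mp hx
  rw [← zpow_mod_orderOf, orderOf_sr]
  rcases Int.emod_two_eq m with h | h <;> simp [h]

theorem r_mem_zpowers_r_one (i : ZMod n) : r i ∈ Subgroup.zpowers (r 1 : DihedralGroup n) :=
  ⟨ZMod.cast i, by simp⟩

theorem enhancedPowerGraph_adj_r_r {i j : ZMod n} :
    (enhancedPowerGraph (DihedralGroup n)).Adj (r i) (r j) ↔ i ≠ j :=
  ⟨fun h => by simpa using h.1,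
    fun h => ⟨by simpa, r 1, r_mem_zpowers_r_one i, r_mem_zpowers_r_one j⟩⟩

theorem enhancedPowerGraph_adj_r_sr {i j : ZMod n} :
    (enhancedPowerGraph (DihedralGroup n)).Adj (r i) (sr j) ↔ i = 0 := by
  constructor
  · rintro ⟨-, z, hri, hsr⟩
    rcases z with k | k
    · obtain ⟨_, h⟩ := exists_eq_r_of_mem_zpowers_r hsr
      cases h
    · rcases eq_one_or_eq_of_mem_zpowers_sr hri with h | h
      · rw [one_def] at h
        exact r.inj h
      · cases h
  · rintro rfl
    exact ⟨by simp [-r_zero], sr j, r_zero (n := n) ▸ Subgroup.one_mem _, Subgroup.mem_zpowers _⟩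

theorem enhancedPowerGraph_adj_sr_r {i j : ZMod n} :
    (enhancedPowerGraph (DihedralGroup n)).Adj (sr j) (r i) ↔ i = 0 :=
  SimpleGraph.adj_comm _ _ _ |>.trans enhancedPowerGraph_adj_r_sr

theorem enhancedPowerGraph_not_adj_sr_sr {i j : ZMod n} :
    ¬ (enhancedPowerGraph (DihedralGroup n)).Adj (sr i) (sr j) := by
  rintro ⟨hne, z, hi, hj⟩
  rcases z with k | k
  · obtain ⟨_, h⟩ := exists_eq_r_of_mem_zpowers_r hi
    cases h
  · rcases eq_one_or_eq_of_mem_zpowers_sr hi, eq_one_or_eq_of_mem_zpowers_sr hj with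
      ⟨hi | hi, hj | hj⟩
    all_goals simp_all [one_def, -r_zero]

theorem sdeg_enhancedPowerGraph_r_zero [NeZero n] :
    sdeg (enhancedPowerGraph (DihedralGroup n)) (r 0) = 2 * n - 1 := by
  have : {u | (enhancedPowerGraph (DihedralGroup n)).Adj (r 0) u} = {r 0}ᶜ := by
    ext (i | j) <;>
      simp [enhancedPowerGraph_adj_r_r, enhancedPowerGraph_adj_r_sr, eq_comm, -r_zero]
  rw [sdeg, this, Set.ncard_compl, nat_card, Set.ncard_singleton]

theorem sdeg_enhancedPowerGraph_r [NeZero n] {i : ZMod n} (hi : i ≠ 0) :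
    sdeg (enhancedPowerGraph (DihedralGroup n)) (r i) = n - 1 := by
  have : {u | (enhancedPowerGraph (DihedralGroup n)).Adj (r i) u} = r '' {i}ᶜ := by
    ext (j | j) <;> simp [enhancedPowerGraph_adj_r_r, enhancedPowerGraph_adj_r_sr, hi, eq_comm]
  rw [sdeg, this, Set.ncard_image_of_injective _ fun _ _ => r.inj, Set.ncard_compl,
    Nat.card_zmod, Set.ncard_singleton]

theorem sdeg_enhancedPowerGraph_sr (i : ZMod n) :
    sdeg (enhancedPowerGraph (DihedralGroup n)) (sr i) = 1 := by
  have : {u | (enhancedPowerGraph (DihedralGroup n)).Adj (sr i) u} = {r 0} := by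
    ext (j | j) <;> simp [SimpleGraph.adj_comm _ (sr i), enhancedPowerGraph_adj_r_sr,
      enhancedPowerGraph_not_adj_sr_sr, -r_zero]
  rw [sdeg, this, Set.ncard_singleton]

def hubEquiv (n : ℕ) : Unit ⊕ ({i : ZMod n // i ≠ 0} ⊕ ZMod n) ≃ DihedralGroup n where
  toFun := Sum.elim (fun _ => r 0) (Sum.elim (fun i => r i) sr)
  invFun
    | r i => if h : i = 0 then .inl () else .inr (.inl ⟨i, h⟩)
    | sr j => .inr (.inr j)
  left_inv := by
    rintro (_ | ⟨i, hi⟩ | j)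
    · simp [-r_zero]
    · simp [hi]
    · rfl
  right_inv := by
    rintro (i | j)
    · by_cases h : i = 0 <;> simp [h]
    · rfl

theorem somborMatrix_enhancedPowerGraph_submatrix_hubEquiv [NeZero n] :
    (somborMatrix (enhancedPowerGraph (DihedralGroup n))).submatrix (hubEquiv n) (hubEquiv n) =
      hubMatrix _ _ (((n : ℝ) - 1) * √2) √((2 * (n : ℝ) - 1) ^ 2 + ((n : ℝ) - 1) ^ 2)
        √((2 * (n : ℝ) - 1) ^ 2 + 1) := by
  have hn : 1 ≤ n := NeZero.one_le
  have hdeg₁ : ((2 * n - 1 : ℕ) : ℝ) = 2 * n - 1 := by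
    rw [Nat.cast_sub (by omega), Nat.cast_mul, Nat.cast_ofNat, Nat.cast_one]
  have hdeg₂ : ((n - 1 : ℕ) : ℝ) = n - 1 := by rw [Nat.cast_sub hn, Nat.cast_one]
  have hclique : √(((n : ℝ) - 1) ^ 2 + ((n : ℝ) - 1) ^ 2) = ((n : ℝ) - 1) * √2 := by
    rw [← two_mul, Real.sqrt_mul zero_le_two, Real.sqrt_sq (by simpa using hn), mul_comm]
  have hspoke₁ : √(((n : ℝ) - 1) ^ 2 + (2 * (n : ℝ) - 1) ^ 2) =
      √((2 * (n : ℝ) - 1) ^ 2 + ((n : ℝ) - 1) ^ 2) := by rw [add_comm]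
  have hspoke₂ : √(1 + (2 * (n : ℝ) - 1) ^ 2) = √((2 * (n : ℝ) - 1) ^ 2 + 1) := by rw [add_comm]
  ext (_ | ⟨i, hi⟩ | j) (_ | ⟨i', hi'⟩ | j') <;>
    simp [*, somborMatrix, hubMatrix, hubEquiv, @eq_comm _ (0 : ZMod n),
      enhancedPowerGraph_adj_r_r, enhancedPowerGraph_adj_r_sr, enhancedPowerGraph_adj_sr_r,
      enhancedPowerGraph_not_adj_sr_sr, sdeg_enhancedPowerGraph_r_zero, sdeg_enhancedPowerGraph_r,
      sdeg_enhancedPowerGraph_sr, -r_zero]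

end DihedralGroup

theorem stmt14 (n : ℕ) [NeZero n] (hn : 3 ≤ n) :
    somborCharpoly (enhancedPowerGraph (DihedralGroup n)) =
      (X + C (((n : ℝ) - 1) * rt2)) ^ (n - 2) * X ^ (n - 1) *
        (X ^ 2 * (X - C (((n : ℝ) - 1) * ((n : ℝ) - 2) * rt2)) -
          C (((n : ℝ) - 1) * (5 * (n : ℝ) ^ 2 - 6 * (n : ℝ) + 2)) * X -
          C (2 * (n : ℝ) * (2 * (n : ℝ) ^ 2 - 2 * (n : ℝ) + 1)) *
            (X - C (((n : ℝ) - 1) * ((n : ℝ) - 2) * rt2))) := by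
  have : Fact (1 < n) := ⟨by omega⟩
  have hcard : Fintype.card {i : ZMod n // i ≠ 0} = n - 1 := by
    rw [Fintype.card_subtype_compl, Fintype.card_subtype_eq, ZMod.card]
  have hcast : ((n - 1 : ℕ) : ℝ) = n - 1 := by rw [Nat.cast_sub (by omega), Nat.cast_one]
  have hclique : ((n : ℝ) - 1 - 1) * (((n : ℝ) - 1) * √2) =
      ((n : ℝ) - 1) * ((n : ℝ) - 2) * rt2 := by
    rw [rt2]; ring
  have hspoke₁ : ((n : ℝ) - 1) * √((2 * (n : ℝ) - 1) ^ 2 + ((n : ℝ) - 1) ^ 2) ^ 2 =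
      ((n : ℝ) - 1) * (5 * (n : ℝ) ^ 2 - 6 * (n : ℝ) + 2) := by
    rw [Real.sq_sqrt (by positivity)]; ring
  have hspoke₂ : (n : ℝ) * √((2 * (n : ℝ) - 1) ^ 2 + 1) ^ 2 =
      2 * (n : ℝ) * (2 * (n : ℝ) ^ 2 - 2 * (n : ℝ) + 1) := by
    rw [Real.sq_sqrt (by positivity)]; ring
  have : Nonempty {i : ZMod n // i ≠ 0} := ⟨⟨1, one_ne_zero⟩⟩
  rw [somborCharpoly, ← charpoly_reindex (DihedralGroup.hubEquiv n).symm, reindex_apply,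
    Equiv.symm_symm, DihedralGroup.somborMatrix_enhancedPowerGraph_submatrix_hubEquiv,
    charpoly_hubMatrix, hcard, ZMod.card, hcast, hclique, hspoke₁, hspoke₂,
    show n - 1 - 1 = n - 2 by omega, rt2]
end
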